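/- Let i ∈ [0, N−1] and let M be a nonempty subset of {m ∈ [i, N−1] : |S_m \ S_i| ≥ 2}. Then the Hamming weight of g_i ⊕ ⊕_{m∈M} g_m is strictly greater than w(g_i) = 2^{|S_i|}. -/

import Mathlib

noncomputable section
open scoped Classical
open Finset

/-- The 2×2 binary matrix [[1,0],[1,1]], as an ℕ-indexed function (zero outside range). -/
def G2 (a b : ℕ) : ZMod 2 :=
  if a = 0 ∧ b = 0 then 1
  else if a = 1 ∧ b = 0 then 1
  else if a = 1 ∧ b = 1 then 1
  else 0

/-- `G n i c` is the (i,c) entry of the n-th Kronecker power over F₂ of [[1,0],[1,1]],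
for row/column indices i, c ∈ [0, 2^n − 1] (standard row-major index flattening). -/
def G : ℕ → ℕ → ℕ → ZMod 2
  | 0 => fun i c => if i = 0 ∧ c = 0 then 1 else 0
  | n + 1 => fun i c => G2 (i / 2 ^ n) (c / 2 ^ n) * G n (i % 2 ^ n) (c % 2 ^ n)

/-- Row i of the polar transform G_N (N = 2^n), as a vector of its coordinates. -/
def g (n i : ℕ) : ℕ → ZMod 2 := fun c => G n i c

/-- S_i ⊆ [0, n−1]: the support of the binary representation of i. -/
def S (n i : ℕ) : Finset ℕ := (Finset.range n).filter fun a => i.testBit a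

/-- T_i = [0, n−1] \ S_i. -/
def T (n i : ℕ) : Finset ℕ := Finset.range n \ S n i

/-- Hamming weight of a vector whose coordinates are indexed by [0, 2^n − 1]. -/
def wt (n : ℕ) (v : ℕ → ZMod 2) : ℕ :=
  ((Finset.range (2 ^ n)).filter fun c => v c ≠ 0).card

/-- The index in [0, 2^n − 1] whose binary support is the set U ⊆ [0, n−1]. -/
def idx (U : Finset ℕ) : ℕ := ∑ a ∈ U, 2 ^ a

/-- K_i = {j ∈ [i+1, N−1] : w(g_j) ≥ w(g_i ⊕ g_j) and w(g_i ⊕ g_j) = w(g_i)}. -/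
def K (n i : ℕ) : Finset ℕ :=
  (Finset.Ico (i + 1) (2 ^ n)).filter fun j =>
    wt n (g n i + g n j) ≤ wt n (g n j) ∧ wt n (g n i + g n j) = wt n (g n i)

/-- One generating step of the partial order on [0, 2^n − 1]. -/
def poStep (n i j : ℕ) : Prop :=
  i < 2 ^ n ∧ j < 2 ^ n ∧
    (S n i ⊆ S n j ∨
      ∃ a b, a ∈ S n i ∧ b ∉ S n i ∧ a < b ∧ S n j = insert b (S n i \ {a}))

/-- The partial order ⪯: reflexive–transitive closure of the generating relation. -/
def po (n : ℕ) : ℕ → ℕ → Prop := Relation.ReflTransGen (poStep n)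

/-- Partial Order Property of an information set I ⊆ [0, 2^n − 1]. -/
def POP (n : ℕ) (I : Finset ℕ) : Prop :=
  ∀ i ∈ I, ∀ j, j < 2 ^ n → po n i j → j ∈ I

/-- The code C(I): all F₂-linear combinations (i.e. subset sums) of the rows g_i, i ∈ I. -/
def codewords (n : ℕ) (I : Finset ℕ) : Finset (ℕ → ZMod 2) :=
  I.powerset.image fun H => ∑ h ∈ H, g n h

/-- A_w(I): the number of codewords of C(I) of Hamming weight w. -/
def A (n : ℕ) (I : Finset ℕ) (w : ℕ) : ℕ :=
  ((codewords n I).filter fun v => wt n v = w).card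

/-- The coset C_i(I) = {g_i ⊕ ⊕_{h∈H} g_h : H ⊆ I \ [0,i]}. -/
def coset (n : ℕ) (I : Finset ℕ) (i : ℕ) : Finset (ℕ → ZMod 2) :=
  ((I.filter fun h => i < h).powerset).image fun H => g n i + ∑ h ∈ H, g n h

/-- A_{i,w}(I): the number of vectors of Hamming weight w in the coset C_i(I). -/
def Ai (n : ℕ) (I : Finset ℕ) (i w : ℕ) : ℕ :=
  ((coset n I i).filter fun v => wt n v = w).card

/-!
Identify a column `c < 2 ^ n` with its bit set `S_c ⊆ [0, n)`. Then `g_m` is the indicator of the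
subsets of `S_m`, and the vector in question is `h = 1_{⊆ S_i} + f` with `f = ∑_{m ∈ M} 1_{⊆ S_m}`.

Fix `a ∈ S_m \ S_i` for some `m ∈ M`. For `R ⊆ S_i`, toggling a second element `b ∈ S_m \ S_i`
pairs off the sets `U` with `U ∩ S_i = R` and `a ∉ U` while preserving `U ⊆ S_m`, so `f` sums to
zero over this fibre. Hence each `R ⊆ S_i` with `f R ≠ 0`, i.e. each zero of `h` inside the support
of `g_i`, has a partner `U ⊄ S_i` with `a ∉ U`, `U ∩ S_i = R` and `f U ≠ 0`, i.e. a one of `h`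
outside it. Finally `f = 1` at a set `S_m` maximal among those containing `a`: one more one of `h`
outside, missed by the partners since they avoid `a`.
-/

section DownIndicator

variable {α : Type*} [DecidableEq α]

def downIndicator (T U : Finset α) : ZMod 2 := if U ⊆ T then 1 else 0

variable {X I : Finset α} {𝓜 : Finset (Finset α)}

lemma downIndicator_symmDiff_singleton {T : Finset α} {b : α} (hb : b ∈ T) (U : Finset α) :
    downIndicator T (symmDiff U {b}) = downIndicator T U := by
  have : symmDiff U {b} ⊆ T ↔ U ⊆ T := by
    simp only [subset_iff, mem_symmDiff, mem_singleton]
    grind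
  simp only [downIndicator, this]

lemma sum_downIndicator_filter_eq_zero {T R : Finset α} {a : α} (hTX : T ⊆ X)
    (hTI : 2 ≤ #(T \ I)) :
    ∑ U ∈ X.powerset with U ∩ I = R ∧ a ∉ U, downIndicator T U = 0 := by
  obtain ⟨b, hb⟩ : ((T \ I).erase a).Nonempty := by
    rw [← card_pos]; have := pred_card_le_card_erase (s := T \ I) (a := a); omega
  obtain ⟨hba, hbT, hbI⟩ : b ≠ a ∧ b ∈ T ∧ b ∉ I := by simpa using hb
  refine sum_involution (fun U _ ↦ symmDiff U {b}) (fun U _ ↦ ?_) (fun U _ _ ↦ ?_)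
    (fun U hU ↦ ?_) (fun U _ ↦ symmDiff_symmDiff_cancel_right _ _)
  · rw [downIndicator_symmDiff_singleton hbT]; exact CharTwo.add_self_eq_zero _
  · simp [symmDiff_eq_left]
  · simp only [mem_filter, mem_powerset] at hU ⊢
    obtain ⟨hUX, rfl, haU⟩ := hU
    refine ⟨?_, ?_, ?_⟩
    · intro x; simp only [mem_symmDiff, mem_singleton]; grind
    · ext x; simp only [mem_inter, mem_symmDiff, mem_singleton]; grind
    · simp only [mem_symmDiff, mem_singleton]; grind

lemma sum_downIndicator_eq_one_of_maximal {T : Finset α}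
    (hT : Maximal (· ∈ 𝓜) T) : ∑ T' ∈ 𝓜, downIndicator T' T = 1 := by
  have hzero (T' : Finset α) (hT' : T' ∈ 𝓜) (hne : T' ≠ T) : downIndicator T' T = 0 :=
    if_neg fun h ↦ hne (hT.eq_of_ge hT' h)
  rw [sum_eq_single_of_mem T hT.1 hzero]
  exact if_pos subset_rfl

lemma filter_downIndicator_ne_zero (hIX : I ⊆ X) :
    {U ∈ X.powerset | downIndicator I U ≠ 0} = I.powerset := by
  ext U
  rw [mem_filter, mem_powerset, mem_powerset, downIndicator]
  by_cases h : U ⊆ I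
  · simp [h, h.trans hIX]
  · simp [h]

lemma card_support_downIndicator_add (hIX : I ⊆ X) (f : Finset α → ZMod 2) :
    #{U ∈ X.powerset | downIndicator I U + f U ≠ 0} + #{U ∈ I.powerset | f U ≠ 0} =
      2 ^ #I + #{U ∈ X.powerset | ¬U ⊆ I ∧ f U ≠ 0} := by
  have hin : {U ∈ X.powerset | U ⊆ I} = I.powerset := by
    ext U; simp only [mem_filter, mem_powerset]; exact ⟨And.right, fun h ↦ ⟨h.trans hIX, h⟩⟩
  have hsplit := card_filter_add_card_filter_not
    (s := {U ∈ X.powerset | downIndicator I U + f U ≠ 0}) (· ⊆ I)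
  rw [filter_filter, filter_filter] at hsplit
  have hinside : {U ∈ X.powerset | downIndicator I U + f U ≠ 0 ∧ U ⊆ I} =
      {U ∈ I.powerset | f U = 0} := by
    rw [← hin, filter_filter]
    refine filter_congr fun U _ ↦ ?_
    by_cases h : U ⊆ I
    · simp only [downIndicator, h, and_true, true_and]
      generalize f U = x; revert x; decide
    · simp [h]
  have houtside : {U ∈ X.powerset | downIndicator I U + f U ≠ 0 ∧ ¬U ⊆ I} =
      {U ∈ X.powerset | ¬U ⊆ I ∧ f U ≠ 0} := by
    refine filter_congr fun U _ ↦ ?_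
    by_cases h : U ⊆ I <;> simp [downIndicator, h]
  have hpowerset : #{U ∈ I.powerset | f U = 0} + #{U ∈ I.powerset | f U ≠ 0} = 2 ^ #I := by
    rw [← card_powerset]; exact card_filter_add_card_filter_not _
  rw [hinside, houtside] at hsplit
  omega

lemma exists_inter_eq_of_sum_downIndicator_ne_zero (hIX : I ⊆ X) (h𝓜X : ∀ T ∈ 𝓜, T ⊆ X)
    (h𝓜I : ∀ T ∈ 𝓜, 2 ≤ #(T \ I)) {a : α} (haI : a ∉ I) {R : Finset α} (hRI : R ⊆ I)
    (hR : ∑ T ∈ 𝓜, downIndicator T R ≠ 0) :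
    ∃ U ⊆ X, ¬U ⊆ I ∧ a ∉ U ∧ U ∩ I = R ∧ ∑ T ∈ 𝓜, downIndicator T U ≠ 0 := by
  set fiber := {U ∈ X.powerset | U ∩ I = R ∧ a ∉ U}
  have hfiber : ∑ U ∈ fiber, ∑ T ∈ 𝓜, downIndicator T U = 0 := by
    rw [sum_comm]
    exact sum_eq_zero fun T hT ↦ sum_downIndicator_filter_eq_zero (h𝓜X T hT) (h𝓜I T hT)
  have hR_mem : R ∈ fiber := by
    simp only [fiber, mem_filter, mem_powerset]
    exact ⟨hRI.trans hIX, inter_eq_left.2 hRI, fun ha ↦ haI (hRI ha)⟩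
  rw [← add_sum_erase _ _ hR_mem] at hfiber
  have hrest : ∑ U ∈ fiber.erase R, ∑ T ∈ 𝓜, downIndicator T U ≠ 0 := fun h ↦
    hR (by rwa [h, add_zero] at hfiber)
  obtain ⟨U, hU, hfU⟩ := exists_ne_zero_of_sum_ne_zero hrest
  obtain ⟨hUR, hUX, hUI, haU⟩ : U ≠ R ∧ U ⊆ X ∧ U ∩ I = R ∧ a ∉ U := by simpa [fiber] using hU
  exact ⟨U, hUX, fun h ↦ hUR (by rwa [inter_eq_left.2 h] at hUI), haU, hUI, hfU⟩

lemma exists_mem_sum_downIndicator_eq_one {a : α} (h : ∃ T ∈ 𝓜, a ∈ T) :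
    ∃ T ∈ 𝓜, a ∈ T ∧ ∑ T' ∈ 𝓜, downIndicator T' T = 1 := by
  obtain ⟨T₀, hT₀, haT₀⟩ := h
  obtain ⟨T, hT⟩ := exists_maximal (s := {T ∈ 𝓜 | a ∈ T}) ⟨T₀, mem_filter.2 ⟨hT₀, haT₀⟩⟩
  obtain ⟨hT𝓜, haT⟩ := mem_filter.1 hT.1
  exact ⟨T, hT𝓜, haT, sum_downIndicator_eq_one_of_maximal
    ⟨hT𝓜, fun T' hT' hle ↦ hT.2 (mem_filter.2 ⟨hT', hle haT⟩) hle⟩⟩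

theorem two_pow_card_lt_card_support_downIndicator_add_sum (hIX : I ⊆ X)
    (h𝓜X : ∀ T ∈ 𝓜, T ⊆ X) (h𝓜I : ∀ T ∈ 𝓜, 2 ≤ #(T \ I)) (hne : 𝓜.Nonempty) :
    2 ^ #I < #{U ∈ X.powerset | downIndicator I U + ∑ T ∈ 𝓜, downIndicator T U ≠ 0} := by
  obtain ⟨T₀, hT₀⟩ := hne
  obtain ⟨a, ha⟩ : (T₀ \ I).Nonempty := card_pos.1 (by have := h𝓜I T₀ hT₀; omega)
  obtain ⟨haT₀, haI⟩ := mem_sdiff.1 ha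
  obtain ⟨T, hT𝓜, haT, hfT⟩ := exists_mem_sum_downIndicator_eq_one ⟨T₀, hT₀, haT₀⟩
  have hle : #{U ∈ I.powerset | ∑ T ∈ 𝓜, downIndicator T U ≠ 0} ≤
      #{U ∈ X.powerset | ¬U ⊆ I ∧ a ∉ U ∧ ∑ T ∈ 𝓜, downIndicator T U ≠ 0} := by
    refine card_le_card_of_surjOn (· ∩ I) fun R hR ↦ ?_
    obtain ⟨hRI, hfR⟩ : R ⊆ I ∧ ∑ T ∈ 𝓜, downIndicator T R ≠ 0 := by simpa using hR
    obtain ⟨U, hUX, hU⟩ := exists_inter_eq_of_sum_downIndicator_ne_zero hIX h𝓜X h𝓜I haI hRI hfR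
    exact ⟨U, by simpa [hUX] using ⟨hU.1, hU.2.1, hU.2.2.2⟩, hU.2.2.1⟩
  have hlt : #{U ∈ X.powerset | ¬U ⊆ I ∧ a ∉ U ∧ ∑ T ∈ 𝓜, downIndicator T U ≠ 0} <
      #{U ∈ X.powerset | ¬U ⊆ I ∧ ∑ T ∈ 𝓜, downIndicator T U ≠ 0} := by
    refine card_lt_card ⟨fun U hU ↦ ?_, fun h ↦ ?_⟩
    · simp only [mem_filter] at hU ⊢
      exact ⟨hU.1, hU.2.1, hU.2.2.2⟩
    exact (mem_filter.1 (h (mem_filter.2 ⟨mem_powerset.2 (h𝓜X T hT𝓜),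
      fun hTI ↦ haI (hTI haT), hfT ▸ one_ne_zero⟩))).2.2.1 haT
  have := card_support_downIndicator_add hIX fun U ↦ ∑ T ∈ 𝓜, downIndicator T U
  omega

end DownIndicator

lemma S_subset_range (n c : ℕ) : S n c ⊆ range n := filter_subset _ _

lemma notMem_S_self (n c : ℕ) : n ∉ S n c := fun h ↦ (mem_range.1 (S_subset_range n c h)).false

lemma S_eq_toFinset_bitIndices {n c : ℕ} (hc : c < 2 ^ n) : S n c = c.bitIndices.toFinset := by
  ext a
  simp only [S, mem_filter, mem_range, List.mem_toFinset, Nat.mem_bitIndices,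
    and_iff_right_iff_imp]
  intro ha
  by_contra! h
  exact absurd ha (by simp [Nat.testBit_lt_two_pow (hc.trans_le (Nat.pow_le_pow_right two_pos h))])

lemma S_injOn (n : ℕ) : Set.InjOn (S n) (range (2 ^ n)) := fun c hc c' hc' h ↦ by
  rw [mem_coe, mem_range] at hc hc'
  rw [← sum_toFinset_bitIndices_two_pow c, ← sum_toFinset_bitIndices_two_pow c',
    ← S_eq_toFinset_bitIndices hc, ← S_eq_toFinset_bitIndices hc', h]

lemma idx_lt_two_pow {n : ℕ} {U : Finset ℕ} (hU : U ⊆ range n) : idx U < 2 ^ n :=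
  Nat.geomSum_lt le_rfl fun _ ha ↦ mem_range.1 (hU ha)

lemma S_idx {n : ℕ} {U : Finset ℕ} (hU : U ⊆ range n) : S n (idx U) = U := by
  rw [S_eq_toFinset_bitIndices (idx_lt_two_pow hU), idx, toFinset_bitIndices_sum_two_pow]

lemma wt_eq_card_filter_powerset {n : ℕ} {v : ℕ → ZMod 2} {w : Finset ℕ → ZMod 2}
    (hvw : ∀ c < 2 ^ n, v c = w (S n c)) :
    wt n v = #{U ∈ (range n).powerset | w U ≠ 0} := by
  refine card_nbij (S n) (fun c hc ↦ ?_) ((S_injOn n).mono fun c hc ↦ by simp_all) fun U hU ↦ ?_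
  · simp only [coe_filter, mem_range, Set.mem_ofPred_eq] at hc
    simpa [S_subset_range, ← hvw c hc.1] using hc.2
  · simp only [coe_filter, mem_powerset, Set.mem_ofPred_eq] at hU
    refine ⟨idx U, ?_, S_idx hU.1⟩
    simpa [idx_lt_two_pow hU.1, hvw _ (idx_lt_two_pow hU.1), S_idx hU.1] using hU.2

lemma S_mod_two_pow (n c : ℕ) : S n (c % 2 ^ n) = S n c :=
  filter_congr fun a ha ↦ by simp [Nat.testBit_mod_two_pow, mem_range.1 ha]

lemma S_succ (n c : ℕ) : S (n + 1) c = if c.testBit n then insert n (S n c) else S n c := by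
  rw [S, range_add_one, filter_insert]
  rfl

lemma div_two_pow_eq_ite {n c : ℕ} (hc : c < 2 ^ (n + 1)) :
    c / 2 ^ n = if c.testBit n then 1 else 0 := by
  have : c / 2 ^ n < 2 := Nat.div_lt_of_lt_mul (by rwa [← pow_succ])
  rw [Nat.testBit_eq_decide_div_mod_eq, Nat.mod_eq_of_lt this]
  interval_cases c / 2 ^ n <;> rfl

lemma G_eq_downIndicator {n i c : ℕ} (hi : i < 2 ^ n) (hc : c < 2 ^ n) :
    G n i c = downIndicator (S n i) (S n c) := by
  induction n generalizing i c with
  | zero =>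
    obtain rfl : i = 0 := by simpa using hi
    obtain rfl : c = 0 := by simpa using hc
    rfl
  | succ n ih =>
    change G2 (i / 2 ^ n) (c / 2 ^ n) * G n (i % 2 ^ n) (c % 2 ^ n) = _
    rw [ih (Nat.mod_lt _ (Nat.two_pow_pos n)) (Nat.mod_lt _ (Nat.two_pow_pos n)),
      S_mod_two_pow, S_mod_two_pow, div_two_pow_eq_ite hi, div_two_pow_eq_ite hc, S_succ, S_succ]
    have hi' := notMem_S_self n i
    have hc' := notMem_S_self n c
    split_ifs <;> simp [G2, downIndicator, subset_insert_iff_of_notMem, insert_subset_iff, *]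

theorem weight_strictly_greater_general (n : ℕ) (i : ℕ) (hi : i < 2 ^ n)
    (M : Finset ℕ)
    (hM : M ⊆ (Finset.Ico i (2 ^ n)).filter fun m => 2 ≤ (S n m \ S n i).card)
    (hne : M.Nonempty) :
    2 ^ (S n i).card < wt n (g n i + ∑ m ∈ M, g n m) ∧
      wt n (g n i) = 2 ^ (S n i).card := by
  have hM_mem (m : ℕ) (hm : m ∈ M) : m < 2 ^ n ∧ 2 ≤ #(S n m \ S n i) := by
    have := mem_filter.1 (hM hm)
    exact ⟨(mem_Ico.1 this.1).2, this.2⟩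
  have hsum (c : ℕ) (hc : c < 2 ^ n) : (g n i + ∑ m ∈ M, g n m) c =
      downIndicator (S n i) (S n c) + ∑ T ∈ M.image (S n), downIndicator T (S n c) := by
    have hinj : Set.InjOn (S n) M := (S_injOn n).mono fun m hm ↦ by simpa using (hM_mem m hm).1
    rw [Pi.add_apply, Finset.sum_apply, sum_image hinj]
    exact congrArg₂ (· + ·) (G_eq_downIndicator hi hc)
      (sum_congr rfl fun m hm ↦ G_eq_downIndicator (hM_mem m hm).1 hc)
  constructor
  · rw [wt_eq_card_filter_powerset (w := fun U ↦ downIndicator (S n i) U +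
      ∑ T ∈ M.image (S n), downIndicator T U) hsum]
    refine two_pow_card_lt_card_support_downIndicator_add_sum (S_subset_range n i) ?_ ?_
      (hne.image _)
    · simpa using fun m _ ↦ S_subset_range n m
    · simpa using fun m hm ↦ (hM_mem m hm).2
  · rw [wt_eq_card_filter_powerset (v := g n i) (w := downIndicator (S n i))
      fun c hc ↦ G_eq_downIndicator hi hc,
      filter_downIndicator_ne_zero (S_subset_range n i), card_powerset]

/-- if M is a nonempty subset of {m ∈ [i,N−1] : |S_m \ S_i| ≥ 2}, then
w(g_i ⊕ ⊕_{m∈M} g_m) > w(g_i) = 2^{|S_i|}. -/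
theorem weight_strictly_greater (n : ℕ) (hn : 1 ≤ n) (i : ℕ) (hi : i < 2 ^ n)
    (M : Finset ℕ)
    (hM : M ⊆ (Finset.Ico i (2 ^ n)).filter fun m => 2 ≤ (S n m \ S n i).card)
    (hne : M.Nonempty) :
    2 ^ (S n i).card < wt n (g n i + ∑ m ∈ M, g n m) ∧
      wt n (g n i) = 2 ^ (S n i).card :=
  weight_strictly_greater_general n i hi M hM hne
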